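/- Let S ⊆ S^{n-1} ⊆ ℝⁿ be Minkowski non-degenerate of box dimension δ ≥ 0 with λ((S)_ε) ∼ ε^{n-δ}. For every α > 0, the outer-type fractal nest O_α S = ⋃_{k≥1} (1 − k^{-α})S is Minkowski non-degenerate of box dimension δ + 1/(α+1): λ((O_α S)_ε) ∼ ε^{n-δ-1/(α+1)} as ε → 0. -/

import Mathlib

open MeasureTheory Pointwise Metric

/-- The outer-type `α`-regular fractal nest `O_α S = ⋃_{k≥1} (1 − k^{-α})·S`. -/
noncomputable def outerNest (n : ℕ) (α : ℝ) (S : Set (EuclideanSpace ℝ (Fin n))) :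
    Set (EuclideanSpace ℝ (Fin n)) :=
  ⋃ k : ℕ, (1 - ((k : ℝ) + 1) ^ (-α)) • S

section Aux
variable {n : ℕ}

lemma cthick_smul_eq (t : ℝ) (ht : 0 < t) (ε : ℝ) (S : Set (EuclideanSpace ℝ (Fin n))) :
    cthickening ε (t • S) = t • cthickening (ε / t) S := by
  ext x
  have hx : x = t • (t⁻¹ • x) := by rw [smul_inv_smul₀ ht.ne']
  rw [Set.mem_smul_set_iff_inv_smul_mem₀ ht.ne', mem_cthickening_iff, mem_cthickening_iff]
  have h1 : Metric.infEDist x (t • S) = ‖t‖₊ • Metric.infEDist (t⁻¹ • x) S := by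
    conv_lhs => rw [hx]
    exact infEDist_smul₀ ht.ne' S _
  rw [h1]
  have hn : (‖t‖₊ : ENNReal) = ENNReal.ofReal t := by
    exact Real.enorm_eq_ofReal ht.le
  have he : ENNReal.ofReal ε = ENNReal.ofReal t * ENNReal.ofReal (ε / t) := by
    rw [← ENNReal.ofReal_mul ht.le, mul_div_cancel₀ _ ht.ne']
  rw [ENNReal.smul_def, smul_eq_mul, hn, he]
  exact ENNReal.mul_le_mul_iff_right (by simp [ht.le, ht]) ENNReal.ofReal_ne_top

lemma vol_smul (t : ℝ) (ht : 0 ≤ t) (A : Set (EuclideanSpace ℝ (Fin n))) :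
    volume (t • A) = ENNReal.ofReal (t ^ n) * volume A := by
  rw [Measure.addHaar_smul, finrank_euclideanSpace_fin, abs_of_nonneg (pow_nonneg ht n)]

lemma gap_lower {α : ℝ} (hα : 0 < α) {a : ℝ} (ha : 1 ≤ a) :
    α * (a + 1) ^ (-α - 1) ≤ a ^ (-α) - (a + 1) ^ (-α) := by
  have ha0 : (0:ℝ) < a := lt_of_lt_of_le one_pos ha
  have hab : a < a + 1 := by linarith
  have hcont : ContinuousOn (fun x : ℝ => x ^ (-α)) (Set.Icc a (a + 1)) := by
    intro x hx
    exact (Real.continuousAt_rpow_const x (-α)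
      (Or.inl (by nlinarith [hx.1] : x ≠ 0))).continuousWithinAt
  have hderiv : ∀ x ∈ Set.Ioo a (a + 1),
      HasDerivAt (fun x : ℝ => x ^ (-α)) (-α * x ^ (-α - 1)) x := by
    intro x hx
    exact Real.hasDerivAt_rpow_const (Or.inl (by nlinarith [hx.1] : x ≠ 0))
  obtain ⟨c, hc, hceq⟩ := exists_hasDerivAt_eq_slope (fun x : ℝ => x ^ (-α))
    (fun x => -α * x ^ (-α - 1)) hab hcont hderiv
  have hc0 : 0 < c := lt_trans ha0 hc.1
  have : a ^ (-α) - (a + 1) ^ (-α) = α * c ^ (-α - 1) := by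
    have h1 : (a + 1) - a = 1 := by ring
    rw [h1, div_one] at hceq
    nlinarith [hceq]
  rw [this]
  have := Real.rpow_le_rpow_of_nonpos hc0 hc.2.le (by linarith : -α - 1 ≤ 0)
  nlinarith

end Aux

set_option maxHeartbeats 1000000 in
/-- **Outer-type nests (Theorem 2).** If `S ⊆ S^{n-1}` is Minkowski
non-degenerate of box dimension `δ ≥ 0` (i.e. `λ(S_ε) ∼ ε^{n-δ}`), then for
every `α > 0` the outer nest `O_α S` is Minkowski non-degenerate of box
dimension `δ + 1/(α+1)`: `λ((O_α S)_ε) ∼ ε^{n-δ-1/(α+1)}` for small `ε`. -/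
theorem dimB_outerNest (n : ℕ) (S : Set (EuclideanSpace ℝ (Fin n)))
    (hS : S ⊆ Metric.sphere 0 1) (δ : ℝ) (hδ : 0 ≤ δ) (α : ℝ) (hα : 0 < α)
    (hnd : ∃ M : ℝ, 1 ≤ M ∧ ∃ ε₀ : ℝ, 0 < ε₀ ∧ ∀ ε : ℝ, 0 < ε → ε ≤ ε₀ →
      M⁻¹ * ε ^ ((n : ℝ) - δ) ≤ (volume (Metric.cthickening ε S)).toReal ∧
      (volume (Metric.cthickening ε S)).toReal ≤ M * ε ^ ((n : ℝ) - δ)) :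
    ∃ M : ℝ, 1 ≤ M ∧ ∃ ε₀ : ℝ, 0 < ε₀ ∧ ∀ ε : ℝ, 0 < ε → ε ≤ ε₀ →
      M⁻¹ * ε ^ ((n : ℝ) - δ - 1 / (α + 1)) ≤
          (volume (Metric.cthickening ε (outerNest n α S))).toReal ∧
        (volume (Metric.cthickening ε (outerNest n α S))).toReal ≤
          M * ε ^ ((n : ℝ) - δ - 1 / (α + 1)) := by

  obtain ⟨M, hM1, ε₀, hε₀, hbound⟩ := hnd
  have hM0 : (0:ℝ) < M := lt_of_lt_of_le one_pos hM1
  set β : ℝ := 1 / (α + 1) with hβ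
  have hα1 : (0:ℝ) < α + 1 := by linarith
  have hβ0 : 0 < β := by positivity
  set t : ℕ → ℝ := fun k => 1 - ((k : ℝ) + 1) ^ (-α) with ht_def
  have hOunion : outerNest n α S = ⋃ k : ℕ, t k • S := rfl
  have hk1 : ∀ k : ℕ, (1:ℝ) ≤ (k:ℝ) + 1 := fun k => by
    have := Nat.cast_nonneg (α := ℝ) k; linarith
  have hrpow_pos : ∀ k : ℕ, 0 < ((k:ℝ) + 1) ^ (-α) := fun k =>
    Real.rpow_pos_of_pos (by positivity) _
  have ht_nonneg : ∀ k : ℕ, 0 ≤ t k := by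
    intro k
    have := Real.rpow_le_one_of_one_le_of_nonpos (hk1 k) (by linarith : -α ≤ 0)
    simp only [ht_def]; linarith
  have ht_lt_one : ∀ k : ℕ, t k < 1 := by
    intro k
    have := hrpow_pos k
    simp only [ht_def]; linarith
  set c : ℝ := 1 - (2:ℝ) ^ (-α) with hc_def
  have hc0 : 0 < c := by
    have := Real.rpow_lt_one_of_one_lt_of_neg (by norm_num : (1:ℝ) < 2)
      (by linarith : -α < 0)
    simp only [hc_def]; linarith
  have hc1 : c < 1 := by
    have : (0:ℝ) < (2:ℝ) ^ (-α) := Real.rpow_pos_of_pos (by norm_num) _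
    simp only [hc_def]; linarith
  have ht_ge_c : ∀ k : ℕ, 1 ≤ k → c ≤ t k := by
    intro k hk
    have h2 : (2:ℝ) ≤ (k:ℝ) + 1 := by
      have : (1:ℝ) ≤ (k:ℝ) := by exact_mod_cast hk
      linarith
    have := Real.rpow_le_rpow_of_nonpos (by norm_num : (0:ℝ) < 2) h2
      (by linarith : -α ≤ 0)
    simp only [ht_def, hc_def]; linarith
  have ht_mono : ∀ j k : ℕ, j ≤ k → t j ≤ t k := by
    intro j k hjk
    have hbase : (j:ℝ) + 1 ≤ (k:ℝ) + 1 := by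
      have : (j:ℝ) ≤ (k:ℝ) := by exact_mod_cast hjk
      linarith
    have := Real.rpow_le_rpow_of_nonpos (by positivity : (0:ℝ) < (j:ℝ)+1) hbase
      (by linarith : -α ≤ 0)
    simp only [ht_def]; linarith
  have hs_norm : ∀ s ∈ S, ‖s‖ = 1 := by
    intro s hs
    simpa [mem_sphere_iff_norm] using hS hs
  -- subsets of balls
  have hsub_ball : ∀ g : ℝ, 0 ≤ g → g ≤ 1 → g • S ⊆ closedBall (0:EuclideanSpace ℝ (Fin n)) 1 := by
    intro g hg0 hg1 x hx
    obtain ⟨s, hs, rfl⟩ := hx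
    simp only [mem_closedBall, dist_zero_right, norm_smul, hs_norm s hs,
      Real.norm_eq_abs, abs_of_nonneg hg0, mul_one]
    exact hg1
  have hO_ball : outerNest n α S ⊆ closedBall (0:EuclideanSpace ℝ (Fin n)) 1 := by
    rw [hOunion]
    exact Set.iUnion_subset fun k => hsub_ball _ (ht_nonneg k) (ht_lt_one k).le
  have hfin : ∀ (A : Set (EuclideanSpace ℝ (Fin n))) (r R : ℝ), 0 ≤ R →
      A ⊆ closedBall 0 R → volume (cthickening r A) ≠ ⊤ := by
    intro A r R hR hA
    have hsub : cthickening r A ⊆ closedBall 0 (max r 0 + R) := by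
      calc cthickening r A ⊆ cthickening (max r 0) (closedBall 0 R) :=
            (cthickening_mono (le_max_left _ _) A).trans
              (cthickening_subset_of_subset _ hA)
        _ = closedBall 0 (max r 0 + R) := cthickening_closedBall (le_max_right _ _) hR _
    exact (lt_of_le_of_lt (measure_mono hsub) measure_closedBall_lt_top).ne
  -- per-copy upper bound
  have hcopyU : ∀ g r : ℝ, c ≤ g → g ≤ 1 → 0 < r → r / c ≤ ε₀ →
      volume (cthickening r (g • S)) ≤ ENNReal.ofReal (M * (r / c) ^ ((n:ℝ) - δ)) := by
    intro g r hgc hg1 hr0 hrc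
    have hg0 : 0 < g := lt_of_lt_of_le hc0 hgc
    have hrc0 : 0 < r / c := div_pos hr0 hc0
    rw [cthick_smul_eq g hg0 r S, vol_smul g hg0.le]
    have h1 : volume (cthickening (r / g) S) ≤ volume (cthickening (r / c) S) :=
      measure_mono (cthickening_mono (by gcongr) S)
    have h2 : volume (cthickening (r / c) S) ≤ ENNReal.ofReal (M * (r / c) ^ ((n:ℝ) - δ)) := by
      have hfinS := hfin S (r / c) 1 zero_le_one (hS.trans sphere_subset_closedBall)
      rw [ENNReal.le_ofReal_iff_toReal_le hfinS (by positivity)]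
      exact (hbound (r/c) hrc0 hrc).2
    calc ENNReal.ofReal (g ^ n) * volume (cthickening (r / g) S)
        ≤ 1 * ENNReal.ofReal (M * (r / c) ^ ((n:ℝ) - δ)) :=
          mul_le_mul' (ENNReal.ofReal_le_one.mpr (pow_le_one₀ hg0.le hg1)) (h1.trans h2)
      _ = _ := one_mul _
  -- per-copy lower bound
  have hcopyL : ∀ (k : ℕ), 1 ≤ k → ∀ r : ℝ, 0 < r → r ≤ ε₀ →
      ENNReal.ofReal (c ^ n * (M⁻¹ * r ^ ((n:ℝ) - δ))) ≤ volume (cthickening r (t k • S)) := by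
    intro k hk r hr0 hrε
    have htk0 : 0 < t k := lt_of_lt_of_le hc0 (ht_ge_c k hk)
    have hsub : t k • cthickening r S ⊆ cthickening r (t k • S) := by
      rw [cthick_smul_eq (t k) htk0 r S]
      refine Set.smul_set_mono (cthickening_mono ?_ S)
      rw [le_div_iff₀ htk0]
      nlinarith [ht_lt_one k]
    refine le_trans ?_ (measure_mono hsub)
    rw [vol_smul _ htk0.le, ENNReal.ofReal_mul (by positivity)]
    refine mul_le_mul' (ENNReal.ofReal_le_ofReal
      (pow_le_pow_left₀ hc0.le (ht_ge_c k hk) n)) ?_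
    rw [ENNReal.ofReal_le_iff_le_toReal
      (hfin S r 1 zero_le_one (hS.trans sphere_subset_closedBall))]
    exact (hbound r hr0 hrε).1
  -- constants
  set V : ENNReal := volume (closedBall (0:EuclideanSpace ℝ (Fin n)) 1) with hV
  have hVfin : V ≠ ⊤ := measure_closedBall_lt_top.ne
  set Vr : ℝ := V.toReal with hVrdef
  have hVr0 : 0 ≤ Vr := ENNReal.toReal_nonneg
  set C : ℝ := max ((3:ℝ) ^ n * Vr) (M * (3 / c) ^ ((n:ℝ) - δ)) with hC
  have hC0 : 0 < C := lt_of_lt_of_le (by positivity) (le_max_right _ _)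
  set L : ℝ := (α / 3) ^ β * c ^ n * M⁻¹ / 2 with hL
  have hL0 : 0 < L := by
    have : (0:ℝ) < (α / 3) ^ β := Real.rpow_pos_of_pos (by positivity) _
    positivity
  set M' : ℝ := 8 * C + 1 / L + 1 with hM'
  have hM'1 : 1 ≤ M' := by
    have h1 : 0 < 1 / L := by positivity
    rw [hM']; linarith
  refine ⟨M', hM'1, min (min 1 ε₀) (min (ε₀ * c / 3) (α / (3 * (4:ℝ) ^ (α+1)))), ?_, ?_⟩
  · have h4 : (0:ℝ) < (4:ℝ) ^ (α+1) := Real.rpow_pos_of_pos (by norm_num) _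
    have : (0:ℝ) < α / (3 * (4:ℝ) ^ (α+1)) := by positivity
    have : (0:ℝ) < ε₀ * c / 3 := by positivity
    simp only [lt_min_iff]
    refine ⟨⟨one_pos, hε₀⟩, by positivity, by positivity⟩
  intro ε hε hεle
  simp only [le_min_iff] at hεle
  obtain ⟨⟨hε1, hεε₀⟩, hε3c', hεα⟩ := hεle
  have hε3c : 3 * ε / c ≤ ε₀ := by
    rw [div_le_iff₀ hc0]; nlinarith
  constructor
  · -- LOWER BOUND
    set B : ℝ := (α / (3*ε)) ^ β with hB
    have hB0 : 0 < B := Real.rpow_pos_of_pos (by positivity) _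
    have hB4 : (4:ℝ) ≤ B := by
      have h4 : (0:ℝ) < (4:ℝ) ^ (α+1) := Real.rpow_pos_of_pos (by norm_num) _
      have h1 : (4:ℝ) ^ (α+1) ≤ α / (3*ε) := by
        rw [le_div_iff₀ (by positivity)]
        have := (le_div_iff₀ (by positivity : (0:ℝ) < 3 * (4:ℝ) ^ (α+1))).mp hεα
        nlinarith
      have h2 : ((4:ℝ) ^ (α+1)) ^ β ≤ B := Real.rpow_le_rpow (by positivity) h1 hβ0.le
      rwa [← Real.rpow_mul (by norm_num : (0:ℝ) ≤ 4), hβ, mul_one_div,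
        div_self hα1.ne', Real.rpow_one] at h2
    set N : ℕ := ⌊B⌋₊ - 1 with hN
    have hfl4 : 4 ≤ ⌊B⌋₊ := Nat.le_floor (by exact_mod_cast hB4)
    have hN3 : 3 ≤ N := by omega
    have hNcast : (N:ℝ) = (⌊B⌋₊ : ℝ) - 1 := by
      rw [hN, Nat.cast_sub (by omega)]; norm_num
    have hN1B : (N:ℝ) + 1 ≤ B := by
      rw [hNcast]
      have := Nat.floor_le hB0.le
      linarith
    have hNgeB2 : B / 2 ≤ (N:ℝ) := by
      rw [hNcast]
      have := Nat.sub_one_lt_floor B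
      linarith
    have hBval : α * B ^ (-α-1) = 3*ε := by
      rw [hB, ← Real.rpow_mul (by positivity)]
      rw [show β * (-α-1) = -1 by rw [hβ]; field_simp; ring]
      rw [Real.rpow_neg_one]
      field_simp
    have hsep : ∀ j k : ℕ, 1 ≤ j → j < k → k ≤ N → t j + 3*ε ≤ t k := by
      intro j k hj hjk hkN
      have hgap := gap_lower hα (a := (j:ℝ)+1) (by linarith [hk1 j])
      have hstep : α * ((j:ℝ) + 2) ^ (-α-1) ≤ t (j+1) - t j := by
        have e : t (j+1) - t j = ((j:ℝ)+1) ^ (-α) - (((j:ℝ)+1)+1) ^ (-α) := by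
          simp only [ht_def]
          push_cast
          ring_nf
        rw [e]
        have e2 : ((j:ℝ)+1)+1 = (j:ℝ)+2 := by ring
        rw [e2] at hgap ⊢
        exact hgap
      have hj2N : (j:ℝ) + 2 ≤ (N:ℝ) + 1 := by
        have h1 : (j:ℝ) + 1 ≤ (k:ℝ) := by exact_mod_cast Nat.succ_le_of_lt hjk
        have h2 : (k:ℝ) ≤ (N:ℝ) := by exact_mod_cast hkN
        linarith
      have hmono2 : ((N:ℝ)+1) ^ (-α-1) ≤ ((j:ℝ)+2) ^ (-α-1) :=
        Real.rpow_le_rpow_of_nonpos (by positivity) hj2N (by linarith)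
      have hB2 : B ^ (-α-1) ≤ ((N:ℝ)+1) ^ (-α-1) :=
        Real.rpow_le_rpow_of_nonpos (by positivity) hN1B (by linarith)
      have hc1' : α * ((N:ℝ)+1) ^ (-α-1) ≤ α * ((j:ℝ)+2) ^ (-α-1) :=
        mul_le_mul_of_nonneg_left hmono2 hα.le
      have hc2' : α * B ^ (-α-1) ≤ α * ((N:ℝ)+1) ^ (-α-1) :=
        mul_le_mul_of_nonneg_left hB2 hα.le
      have hmonot : t (j+1) ≤ t k := ht_mono _ _ (Nat.succ_le_of_lt hjk)
      linarith [hBval]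
    have hdisj : (↑(Finset.Icc 1 N) : Set ℕ).PairwiseDisjoint
        (fun k => cthickening ε (t k • S)) := by
      have key : ∀ j k : ℕ, 1 ≤ j → j < k → k ≤ N →
          Disjoint (cthickening ε (t j • S)) (cthickening ε (t k • S)) := by
        intro j k hj1 hlt hkN
        refine Set.disjoint_left.mpr fun x hxj hxk => ?_
        rw [mem_cthickening_iff] at hxj hxk
        have h32 : ENNReal.ofReal ε < ENNReal.ofReal (3*ε/2) := by
          rw [ENNReal.ofReal_lt_ofReal_iff (by positivity)]
          linarith
        obtain ⟨y, hy, hxy⟩ := EMetric.infEdist_lt_iff.mp (lt_of_le_of_lt hxj h32)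
        obtain ⟨z, hz, hxz⟩ := EMetric.infEdist_lt_iff.mp (lt_of_le_of_lt hxk h32)
        obtain ⟨s1, hs1, rfl⟩ := hy
        obtain ⟨s2, hs2, rfl⟩ := hz
        have hny : ‖t j • s1‖ = t j := by
          rw [norm_smul, hs_norm s1 hs1, Real.norm_eq_abs,
            abs_of_nonneg (ht_nonneg j), mul_one]
        have hnz : ‖t k • s2‖ = t k := by
          rw [norm_smul, hs_norm s2 hs2, Real.norm_eq_abs,
            abs_of_nonneg (ht_nonneg k), mul_one]
        have hd1 : dist x (t j • s1) < 3*ε/2 := edist_lt_ofReal.mp hxy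
        have hd2 : dist x (t k • s2) < 3*ε/2 := edist_lt_ofReal.mp hxz
        have hsep' : t j + 3*ε ≤ t k := hsep j k hj1 hlt hkN
        have hlb : t k - t j ≤ dist (t j • s1) (t k • s2) := by
          rw [dist_eq_norm, norm_sub_rev]
          calc t k - t j = ‖t k • s2‖ - ‖t j • s1‖ := by rw [hny, hnz]
            _ ≤ ‖t k • s2 - t j • s1‖ := norm_sub_norm_le _ _
        have htri : dist (t j • s1) (t k • s2)
            ≤ dist (t j • s1) x + dist x (t k • s2) := dist_triangle _ _ _
        rw [dist_comm] at hd1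
        linarith
      intro j hj k hk hjk
      simp only [Finset.coe_Icc, Set.mem_Icc] at hj hk
      rcases lt_or_gt_of_ne hjk with hlt | hgt
      · exact key j k hj.1 hlt hk.2
      · exact (key k j hk.1 hgt hj.2).symm
    have hUsub : (⋃ k ∈ Finset.Icc 1 N, cthickening ε (t k • S))
        ⊆ cthickening ε (outerNest n α S) := by
      refine Set.iUnion₂_subset fun k _ => cthickening_subset_of_subset _ ?_
      rw [hOunion]
      exact Set.subset_iUnion (fun k => t k • S) k
    have hmeas : ∀ k ∈ Finset.Icc 1 N, MeasurableSet (cthickening ε (t k • S)) :=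
      fun k _ => isClosed_cthickening.measurableSet
    have hsumeq : ∑ k ∈ Finset.Icc 1 N, volume (cthickening ε (t k • S))
        = volume (⋃ k ∈ Finset.Icc 1 N, cthickening ε (t k • S)) :=
      (measure_biUnion_finset hdisj hmeas).symm
    have hterms : ∀ k ∈ Finset.Icc 1 N,
        ENNReal.ofReal (c^n * (M⁻¹ * ε ^ ((n:ℝ) - δ)))
          ≤ volume (cthickening ε (t k • S)) := fun k hk =>
      hcopyL k (Finset.mem_Icc.mp hk).1 ε hε hεε₀
    have hcard : (Finset.Icc 1 N).card = N := by rw [Nat.card_Icc]; omega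
    have hsum_ge := Finset.card_nsmul_le_sum (Finset.Icc 1 N) _ _ hterms
    rw [hcard] at hsum_ge
    have hNB : ENNReal.ofReal (B/2) ≤ (N : ENNReal) := by
      rw [← ENNReal.ofReal_natCast]
      exact ENNReal.ofReal_le_ofReal hNgeB2
    have hBsplit : B = (α/3) ^ β * ε ^ (-β) := by
      rw [hB, show α/(3*ε) = (α/3) * ε⁻¹ by ring,
        Real.mul_rpow (by positivity) (by positivity),
        Real.inv_rpow hε.le, ← Real.rpow_neg hε.le]
    have hlow1 : ENNReal.ofReal (L * ε ^ ((n:ℝ) - δ - β))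
        ≤ volume (cthickening ε (outerNest n α S)) := by
      calc ENNReal.ofReal (L * ε ^ ((n:ℝ)-δ-β))
          ≤ ENNReal.ofReal (B/2 * (c^n * (M⁻¹ * ε ^ ((n:ℝ)-δ)))) := by
            refine ENNReal.ofReal_le_ofReal (le_of_eq ?_)
            rw [show (n:ℝ) - δ - β = ((n:ℝ) - δ) + (-β) by ring, Real.rpow_add hε,
              hBsplit, hL]
            ring
        _ = ENNReal.ofReal (B/2) * ENNReal.ofReal (c^n * (M⁻¹ * ε^((n:ℝ)-δ))) := by
            rw [← ENNReal.ofReal_mul (by positivity)]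
        _ ≤ (N:ENNReal) * ENNReal.ofReal (c^n * (M⁻¹ * ε^((n:ℝ)-δ))) :=
            mul_le_mul_left hNB _
        _ = N • ENNReal.ofReal (c^n * (M⁻¹ * ε^((n:ℝ)-δ))) := (nsmul_eq_mul _ _).symm
        _ ≤ ∑ k ∈ Finset.Icc 1 N, volume (cthickening ε (t k • S)) := hsum_ge
        _ = volume (⋃ k ∈ Finset.Icc 1 N, cthickening ε (t k • S)) := hsumeq
        _ ≤ volume (cthickening ε (outerNest n α S)) := measure_mono hUsub
    have hfinO : volume (cthickening ε (outerNest n α S)) ≠ ⊤ :=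
      hfin _ ε 1 zero_le_one hO_ball
    have h1 := (ENNReal.ofReal_le_iff_le_toReal hfinO).mp hlow1
    have hM'L : M'⁻¹ ≤ L := by
      have h2 : 1/L ≤ M' := by
        have : 0 < 8 * C := by positivity
        rw [hM']; linarith
      rw [← one_div]
      calc 1/M' ≤ 1/(1/L) := one_div_le_one_div_of_le (by positivity) h2
        _ = L := one_div_one_div L
    calc M'⁻¹ * ε^((n:ℝ)-δ-β) ≤ L * ε^((n:ℝ)-δ-β) :=
          mul_le_mul_of_nonneg_right hM'L (Real.rpow_nonneg hε.le _)
      _ ≤ _ := h1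
  · -- UPPER BOUND
    set K : ℕ := ⌈ε ^ (-β)⌉₊ with hK
    have hεβ1 : (1:ℝ) ≤ ε ^ (-β) :=
      Real.one_le_rpow_of_pos_of_le_one_of_nonpos hε hε1 (by linarith)
    have hKge : ε ^ (-β) ≤ (K:ℝ) := Nat.le_ceil _
    have hK1 : 1 ≤ K := by
      have : (1:ℝ) ≤ (K:ℝ) := le_trans hεβ1 hKge
      exact_mod_cast this
    have hKle : (K:ℝ) ≤ 2 * ε ^ (-β) := by
      have := Nat.ceil_lt_add_one (by positivity : (0:ℝ) ≤ ε ^ (-β))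
      rw [← hK] at this
      linarith
    have hβα : β * α = 1 - β := by
      rw [hβ]; field_simp; ring
    have h1tK : 1 - t K ≤ (K:ℝ) * ε := by
      have e1 : ((K:ℝ)+1) ^ (-α) ≤ (ε ^ (-β)) ^ (-α) :=
        Real.rpow_le_rpow_of_nonpos (by positivity) (by linarith) (by linarith)
      have e2 : (ε ^ (-β)) ^ (-α) = ε ^ (β * α) := by
        rw [← Real.rpow_mul hε.le]; ring_nf
      have e3 : ε ^ (β * α) = ε ^ (-β) * ε := by
        rw [hβα, show (1:ℝ) - β = -β + 1 by ring, Real.rpow_add hε, Real.rpow_one]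
      have e4 : ε ^ (-β) * ε ≤ (K:ℝ) * ε := by nlinarith
      have e5 : 1 - t K = ((K:ℝ)+1) ^ (-α) := by simp only [ht_def]; ring
      rw [e5]
      calc ((K:ℝ)+1) ^ (-α) ≤ (ε ^ (-β)) ^ (-α) := e1
        _ = ε ^ (-β) * ε := by rw [e2, e3]
        _ ≤ (K:ℝ) * ε := e4
    set g : ℕ → ℝ := fun i => if i ≤ K then t i else
      min (t K + ((i - (K+1) : ℕ) : ℝ) * ε) 1 with hg
    have hcover : outerNest n α S ⊆
        ⋃ i ∈ Finset.range (2*K+2), cthickening ε (g i • S) := by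
      rw [hOunion]
      refine Set.iUnion_subset fun k => ?_
      by_cases hk : k ≤ K
      · intro x hx
        refine Set.mem_iUnion₂.mpr ⟨k, Finset.mem_range.mpr (by omega), ?_⟩
        have hgk : g k = t k := if_pos hk
        rw [hgk]
        exact self_subset_cthickening _ hx
      · push_neg at hk
        intro x hx
        obtain ⟨s, hs, rfl⟩ := hx
        set j : ℕ := ⌊(t k - t K) / ε⌋₊ with hj
        have htKk : t K ≤ t k := ht_mono K k (le_of_lt hk)
        have hq0 : 0 ≤ (t k - t K) / ε := div_nonneg (by linarith) hε.le
        have hjle : (j:ℝ) ≤ (t k - t K) / ε := Nat.floor_le hq0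
        have hjlt : (t k - t K) / ε < (j:ℝ) + 1 := Nat.lt_floor_add_one _
        have hjK : j ≤ K := by
          have h1 : (t k - t K) / ε ≤ (K:ℝ) := by
            rw [div_le_iff₀ hε]
            linarith [ht_lt_one k, h1tK]
          have : (j:ℝ) ≤ (K:ℝ) := le_trans hjle h1
          exact_mod_cast this
        set i : ℕ := K + 1 + j with hi
        have hiK : ¬ i ≤ K := by omega
        have hisub : i - (K+1) = j := by omega
        have hjεle : (j:ℝ) * ε ≤ t k - t K := by
          rw [← le_div_iff₀ hε]; exact hjle
        have hraw : t K + (j:ℝ) * ε ≤ t k := by linarith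
        have hgi : g i = t K + (j:ℝ)*ε := by
          simp only [hg, if_neg hiK, hisub]
          exact min_eq_left (le_trans hraw (ht_lt_one k).le)
        have hlt' : t k - t K < ((j:ℝ) + 1) * ε := by
          rw [← div_lt_iff₀ hε]; exact hjlt
        have hdist : dist ((t k) • s) (g i • s) ≤ ε := by
          rw [dist_eq_norm, ← sub_smul, norm_smul, hs_norm s hs, mul_one,
            Real.norm_eq_abs, abs_of_nonneg (by rw [hgi]; linarith)]
          rw [hgi]; nlinarith
        refine Set.mem_iUnion₂.mpr ⟨i, Finset.mem_range.mpr (by omega), ?_⟩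
        exact mem_cthickening_of_dist_le _ _ _ _ (Set.smul_mem_smul_set hs) hdist
    have hcover2 : cthickening ε (outerNest n α S) ⊆
        ⋃ i ∈ Finset.range (2*K+2), cthickening (3*ε) (g i • S) := by
      intro x hx
      have hx2 : x ∈ thickening (2*ε) (outerNest n α S) :=
        cthickening_subset_thickening' (by linarith) (by linarith) _ hx
      obtain ⟨z, hz, hdz⟩ := mem_thickening_iff.mp hx2
      obtain ⟨i, hi, hzi⟩ := Set.mem_iUnion₂.mp (hcover hz)
      refine Set.mem_iUnion₂.mpr ⟨i, hi, ?_⟩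
      rw [mem_cthickening_iff] at hzi ⊢
      calc EMetric.infEdist x (g i • S)
          ≤ EMetric.infEdist z (g i • S) + edist x z :=
            EMetric.infEdist_le_infEdist_add_edist
        _ ≤ ENNReal.ofReal ε + ENNReal.ofReal (2*ε) :=
            add_le_add hzi (le_of_lt (edist_lt_ofReal.mpr hdz))
        _ = ENNReal.ofReal (3*ε) := by
            rw [← ENNReal.ofReal_add hε.le (by linarith)]
            ring_nf
    have hterm : ∀ i ∈ Finset.range (2*K+2),
        volume (cthickening (3*ε) (g i • S)) ≤ ENNReal.ofReal (C * ε ^ ((n:ℝ) - δ)) := by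
      intro i _
      rcases eq_or_ne i 0 with rfl | hi0
      · have hg0 : g 0 = 0 := by
          simp only [hg, if_pos (Nat.zero_le K), ht_def]
          norm_num
        rw [hg0]
        have hsub : cthickening (3*ε) ((0:ℝ) • S)
            ⊆ closedBall (0:EuclideanSpace ℝ (Fin n)) (3*ε) := by
          have h0 : (0:ℝ) • S ⊆ {(0:EuclideanSpace ℝ (Fin n))} := by
            intro x hx; obtain ⟨s, hs, rfl⟩ := hx; simp
          refine le_trans (cthickening_subset_of_subset _ h0) ?_
          rw [cthickening_singleton _ (by positivity : (0:ℝ) ≤ 3*ε)]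
        refine le_trans (measure_mono hsub) ?_
        rw [Measure.addHaar_closedBall' _ _ (by positivity : (0:ℝ) ≤ 3*ε),
          finrank_euclideanSpace_fin, ← hV, ← ENNReal.ofReal_toReal hVfin, ← hVrdef,
          ← ENNReal.ofReal_mul (by positivity)]
        refine ENNReal.ofReal_le_ofReal ?_
        have h1 : ε ^ ((n:ℝ)) ≤ ε ^ ((n:ℝ) - δ) :=
          Real.rpow_le_rpow_of_exponent_ge hε hε1 (by linarith)
        have h2 : (3*ε)^n = 3^n * ε ^ ((n:ℝ)) := by
          rw [Real.rpow_natCast, mul_pow]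
        rw [h2]
        calc 3^n * ε ^ ((n:ℝ)) * Vr = (3^n * Vr) * ε ^ ((n:ℝ)) := by ring
          _ ≤ (3^n * Vr) * ε ^ ((n:ℝ) - δ) :=
              mul_le_mul_of_nonneg_left h1 (by positivity)
          _ ≤ C * ε ^ ((n:ℝ) - δ) :=
              mul_le_mul_of_nonneg_right (le_max_left _ _) (Real.rpow_nonneg hε.le _)
      · have hgc : c ≤ g i ∧ g i ≤ 1 := by
          by_cases hiK : i ≤ K
          · refine ⟨?_, ?_⟩
            · rw [hg]; simp only [if_pos hiK]
              exact ht_ge_c i (Nat.one_le_iff_ne_zero.mpr hi0)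
            · rw [hg]; simp only [if_pos hiK]
              exact (ht_lt_one i).le
          · rw [hg]; simp only [if_neg hiK]
            refine ⟨le_min ?_ hc1.le, min_le_right _ _⟩
            have h1 : c ≤ t K := ht_ge_c K hK1
            have h2 : 0 ≤ ((i - (K+1) : ℕ) : ℝ) * ε := by positivity
            linarith
        have hcu := hcopyU (g i) (3*ε) hgc.1 hgc.2 (by positivity) (by
          rw [div_le_iff₀ hc0] at hε3c ⊢
          linarith)
        refine le_trans hcu (ENNReal.ofReal_le_ofReal ?_)
        rw [show 3*ε/c = (3/c) * ε by ring, Real.mul_rpow (by positivity) hε.le]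
        calc M * ((3/c)^((n:ℝ)-δ) * ε^((n:ℝ)-δ))
            = (M * (3/c)^((n:ℝ)-δ)) * ε^((n:ℝ)-δ) := by ring
          _ ≤ C * ε^((n:ℝ)-δ) :=
              mul_le_mul_of_nonneg_right (le_max_right _ _) (Real.rpow_nonneg hε.le _)
    have hsum_le : volume (cthickening ε (outerNest n α S))
        ≤ ∑ i ∈ Finset.range (2*K+2), volume (cthickening (3*ε) (g i • S)) :=
      le_trans (measure_mono hcover2) (measure_biUnion_finset_le _ _)
    have hsum2 : ∑ i ∈ Finset.range (2*K+2), volume (cthickening (3*ε) (g i • S))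
        ≤ (2*K+2) • ENNReal.ofReal (C * ε ^ ((n:ℝ) - δ)) := by
      have := Finset.sum_le_card_nsmul _ _ _ hterm
      simpa using this
    have hcount : ((2*K+2 : ℕ) : ℝ) ≤ 8 * ε ^ (-β) := by
      push_cast
      have : (1:ℝ) ≤ (K:ℝ) := by exact_mod_cast hK1
      nlinarith
    have hupper : volume (cthickening ε (outerNest n α S))
        ≤ ENNReal.ofReal (8 * C * ε ^ ((n:ℝ) - δ - β)) := by
      refine le_trans (le_trans hsum_le hsum2) ?_
      rw [nsmul_eq_mul]
      have h1 : ((2*K+2 : ℕ) : ENNReal) ≤ ENNReal.ofReal (8 * ε ^ (-β)) := by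
        rw [← ENNReal.ofReal_natCast]
        exact ENNReal.ofReal_le_ofReal hcount
      refine le_trans (mul_le_mul' h1 le_rfl) ?_
      rw [← ENNReal.ofReal_mul (by positivity)]
      refine ENNReal.ofReal_le_ofReal (le_of_eq ?_)
      rw [show (n:ℝ) - δ - β = ((n:ℝ) - δ) + (-β) by ring, Real.rpow_add hε]
      ring
    refine le_trans (ENNReal.toReal_le_of_le_ofReal (by positivity) hupper) ?_
    have h8C : 8 * C ≤ M' := by
      have : 0 < 1 / L := by positivity
      rw [hM']; linarith
    exact mul_le_mul_of_nonneg_right h8C (Real.rpow_nonneg hε.le _)
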